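/- arXiv:1708.02504 — 2 statements merged into one kernel-verified Lean document; each statement's English description precedes it below -/
import Mathlib

section
/- (Leighton–Nehari positivity propagation.) Let φ ∈ C⁴(I) be a nontrivial solution of (σ(x)φ'')'' − p(x)φ = 0 on a real interval I, where σ > 0 is C² and p > 0 is continuous on I, and let a ∈ I. (i) If φ(a) ≥ 0, φ'(a) ≥ 0, φ''(a) ≥ 0 and (σφ'')'(a) ≥ 0, and these four values are not all zero, then φ(x) > 0, φ'(x) > 0, φ''(x) > 0 and (σφ'')'(x) > 0 for every x ∈ I with x > a. (ii) If φ(a) ≥ 0, −φ'(a) ≥ 0, φ''(a) ≥ 0 and −(σφ'')'(a) ≥ 0, and these four values are not all zero, then φ(x) > 0, −φ'(x) > 0, φ''(x) > 0 and −(σφ'')'(x) > 0 for every x ∈ I with x < a. -/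
open Set

/-!
Writing `w = σ φ''`, the equation becomes the cyclic first-order system
`φ' = φ'`, `(φ')' = σ⁻¹ w`, `w' = w'`, `(w')' = p φ`, all of whose coefficients are positive.
For a cyclic system `fᵢ' = cᵢ fᵢ₊₁` with `cᵢ ≥ 0`, nonnegative data at `a` stay nonnegative to
the right: add `ε e^{D(x-a)}` to every component, with `D` bounding the `cᵢ`. Up to the first
zero of a perturbed component all of them are positive, so the derivative of that component is
at least `-cᵢ ε e^{D(x-a)} + D ε e^{D(x-a)} ≥ 0`, and it cannot have dropped to zero.
Hence every component is nondecreasing, the one positive at `a` stays positive, and positivity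
travels backwards around the cycle, since a component whose successor is positive is strictly
increasing. Part (ii) is part (i) for `x ↦ φ (-x)`.
-/

lemma le_of_hasDerivAt_nonneg {g g' : ℝ → ℝ} {a b : ℝ} (hab : a ≤ b)
    (hg : ∀ x ∈ Icc a b, HasDerivAt g (g' x) x) (hg' : ∀ x ∈ Ioo a b, 0 ≤ g' x) :
    g a ≤ g b := by
  refine monotoneOn_of_hasDerivWithinAt_nonneg (f' := g') (convex_Icc a b)
    (fun x hx => (hg x hx).continuousAt.continuousWithinAt) (fun x hx => ?_)
    (fun x hx => hg' x (by rwa [interior_Icc] at hx))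
    (left_mem_Icc.2 hab) (right_mem_Icc.2 hab) hab
  rw [interior_Icc] at hx ⊢
  exact (hg x (Ioo_subset_Icc_self hx)).hasDerivWithinAt

lemma lt_of_hasDerivAt_pos {g g' : ℝ → ℝ} {a b : ℝ} (hab : a < b)
    (hg : ∀ x ∈ Icc a b, HasDerivAt g (g' x) x) (hg' : ∀ x ∈ Ioo a b, 0 < g' x) :
    g a < g b := by
  refine strictMonoOn_of_hasDerivWithinAt_pos (f' := g') (convex_Icc a b)
    (fun x hx => (hg x hx).continuousAt.continuousWithinAt) (fun x hx => ?_)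
    (fun x hx => hg' x (by rwa [interior_Icc] at hx))
    (left_mem_Icc.2 hab.le) (right_mem_Icc.2 hab.le) hab
  rw [interior_Icc] at hx ⊢
  exact (hg x (Ioo_subset_Icc_self hx)).hasDerivWithinAt

lemma exists_first_nonpos {ι : Type*} [Finite ι] {g : ι → ℝ → ℝ} {a b : ℝ}
    (hg : ∀ i, ContinuousOn (g i) (Icc a b)) (ha : ∀ i, 0 < g i a) {j : ι} (hab : a ≤ b)
    (hb : g j b ≤ 0) :
    ∃ t ∈ Ioc a b, ∃ k, g k t ≤ 0 ∧ ∀ s ∈ Ico a t, ∀ i, 0 < g i s := by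
  have hS : IsCompact (⋃ i, Icc a b ∩ g i ⁻¹' Iic 0) := isCompact_iUnion fun i =>
    isCompact_Icc.of_isClosed_subset
      ((hg i).preimage_isClosed_of_isClosed isClosed_Icc isClosed_Iic) inter_subset_left
  obtain ⟨t, htS, ht⟩ := hS.exists_isLeast ⟨b, mem_iUnion.2 ⟨j, ⟨hab, le_rfl⟩, hb⟩⟩
  obtain ⟨k, htI, hk⟩ := mem_iUnion.1 htS
  have hat : a < t := htI.1.lt_of_ne (by rintro rfl; exact (ha k).not_ge hk)
  refine ⟨t, ⟨hat, htI.2⟩, k, hk, fun s hs i => ?_⟩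
  by_contra! hi
  exact hs.2.not_ge (ht (mem_iUnion.2 ⟨i, ⟨hs.1, hs.2.le.trans htI.2⟩, hi⟩))

section CyclicSystem

open Fin.NatCast

variable {n : ℕ} [NeZero n] {J : Set ℝ} {f c : Fin n → ℝ → ℝ} {a : ℝ}

lemma nonneg_of_hasDerivAt_cyclic (hJ : J.OrdConnected)
    (hf : ∀ i, ∀ x ∈ J, HasDerivAt (f i) (c i x * f (i + 1) x) x)
    (hc : ∀ i, ContinuousOn (c i) J) (hc₀ : ∀ i, ∀ x ∈ J, 0 ≤ c i x)
    (ha : a ∈ J) (hfa : ∀ i, 0 ≤ f i a) {b : ℝ} (hb : b ∈ J) (hab : a ≤ b) (i : Fin n) :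
    0 ≤ f i b := by
  by_contra! hneg
  have hsub : Icc a b ⊆ J := hJ.out ha hb
  obtain ⟨C, hC⟩ := isCompact_Icc.exists_bound_of_continuousOn
    (continuousOn_pi.2 fun i => (hc i).mono hsub : ContinuousOn (fun x i => c i x) (Icc a b))
  set D := max C 0
  have hcD : ∀ k, ∀ x ∈ Icc a b, c k x ≤ D := fun k x hx =>
    (le_abs_self _).trans (((norm_le_pi_norm (fun k => c k x) k).trans (hC x hx)).trans
      (le_max_left _ _))
  set E : ℝ → ℝ := fun x => Real.exp (D * (x - a))
  have hE : ∀ x, HasDerivAt E (D * E x) x := fun x => by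
    simpa [E, mul_comm] using (((hasDerivAt_id x).sub_const a).const_mul D).exp
  set ε := -f i b / E b
  have hε : 0 < ε := div_pos (neg_pos.2 hneg) (Real.exp_pos _)
  set g : Fin n → ℝ → ℝ := fun k x => f k x + ε * E x
  have hg : ∀ k, ∀ x ∈ Icc a b, HasDerivAt (g k) (c k x * f (k + 1) x + ε * (D * E x)) x :=
    fun k x hx => (hf k x (hsub hx)).add ((hE x).const_mul ε)
  have hga : ∀ k, 0 < g k a := fun k => by
    simpa [g, E] using add_pos_of_nonneg_of_pos (hfa k) hε
  have hgb : g i b ≤ 0 := by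
    have hεE : ε * E b = -f i b := div_mul_cancel₀ _ (Real.exp_pos _).ne'
    simp only [g, hεE, add_neg_cancel, le_refl]
  obtain ⟨t, ht, k, hkt, hpos⟩ := exists_first_nonpos
    (fun k x hx => (hg k x hx).continuousAt.continuousWithinAt) hga hab hgb
  have hmono : g k a ≤ g k t := le_of_hasDerivAt_nonneg ht.1.le
    (fun x hx => hg k x ⟨hx.1, hx.2.trans ht.2⟩) fun x hx => by
      have hx' : x ∈ Icc a b := ⟨hx.1.le, hx.2.le.trans ht.2⟩
      have hnext := hpos x ⟨hx.1.le, hx.2⟩ (k + 1)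
      have hεE : 0 < ε * E x := mul_pos hε (Real.exp_pos _)
      nlinarith [mul_nonneg (hc₀ k x (hsub hx')) hnext.le,
        mul_nonneg (sub_nonneg.2 (hcD k x hx')) hεE.le]
  linarith [hga k]

lemma pos_of_hasDerivAt_cyclic (hJ : J.OrdConnected)
    (hf : ∀ i, ∀ x ∈ J, HasDerivAt (f i) (c i x * f (i + 1) x) x)
    (hc : ∀ i, ContinuousOn (c i) J) (hc₀ : ∀ i, ∀ x ∈ J, 0 < c i x)
    (ha : a ∈ J) (hfa : ∀ i, 0 ≤ f i a) {k : Fin n} (hk : 0 < f k a)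
    {b : ℝ} (hb : b ∈ J) (hab : a < b) (i : Fin n) : 0 < f i b := by
  have hnonneg : ∀ x ∈ J, a ≤ x → ∀ i, 0 ≤ f i x := fun x hx hax =>
    nonneg_of_hasDerivAt_cyclic hJ hf hc (fun i x hx => (hc₀ i x hx).le) ha hfa hx hax
  have hcascade : ∀ m : ℕ, ∀ x ∈ J, a < x → 0 < f (k - (m : Fin n)) x := by
    intro m
    induction m with
    | zero =>
      intro x hx hax
      have hsub : Icc a x ⊆ J := hJ.out ha hx
      rw [Nat.cast_zero, sub_zero]
      refine hk.trans_le (le_of_hasDerivAt_nonneg hax.le (fun y hy => hf k y (hsub hy))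
        fun y hy => ?_)
      exact mul_nonneg (hc₀ k y (hsub (Ioo_subset_Icc_self hy))).le
        (hnonneg y (hsub (Ioo_subset_Icc_self hy)) hy.1.le _)
    | succ m ih =>
      intro x hx hax
      have hsub : Icc a x ⊆ J := hJ.out ha hx
      have hnext : k - ((m + 1 : ℕ) : Fin n) + 1 = k - (m : Fin n) := by rw [Nat.cast_succ]; abel
      refine (hfa _).trans_lt (lt_of_hasDerivAt_pos hax (fun y hy => hf _ y (hsub hy))
        fun y hy => ?_)
      rw [hnext]
      exact mul_pos (hc₀ _ y (hsub (Ioo_subset_Icc_self hy)))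
        (ih y (hsub (Ioo_subset_Icc_self hy)) hy.1)
  simpa only [Fin.cast_val_eq_self, sub_sub_cancel] using hcascade (k - i).val b hb hab

end CyclicSystem

lemma deriv_comp_neg_eq (g : ℝ → ℝ) : deriv (fun t => g (-t)) = fun t => -deriv g (-t) :=
  funext (deriv_comp_neg g)

lemma deriv_deriv_comp_neg (g : ℝ → ℝ) :
    deriv (deriv fun t => g (-t)) = fun t => deriv (deriv g) (-t) := by
  ext x
  rw [deriv_comp_neg_eq, deriv.fun_neg, deriv_comp_neg, neg_neg]

theorem leighton_nehari_right {I : Set ℝ} (hI : I.OrdConnected) {σ p φ : ℝ → ℝ}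
    (hσ : ContDiff ℝ 2 σ) (hσpos : ∀ x ∈ I, 0 < σ x)
    (hp : ContinuousOn p I) (hppos : ∀ x ∈ I, 0 < p x) (hφ : ContDiff ℝ 4 φ)
    (heq : ∀ x ∈ I, deriv (deriv fun t => σ t * deriv (deriv φ) t) x = p x * φ x)
    {a : ℝ} (ha : a ∈ I) (h₀ : 0 ≤ φ a) (h₁ : 0 ≤ deriv φ a) (h₂ : 0 ≤ deriv (deriv φ) a)
    (h₃ : 0 ≤ deriv (fun t => σ t * deriv (deriv φ) t) a)
    (hne : ¬(φ a = 0 ∧ deriv φ a = 0 ∧ deriv (deriv φ) a = 0 ∧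
      deriv (fun t => σ t * deriv (deriv φ) t) a = 0))
    {x : ℝ} (hx : x ∈ I) (hax : a < x) :
    0 < φ x ∧ 0 < deriv φ x ∧ 0 < deriv (deriv φ) x ∧
      0 < deriv (fun t => σ t * deriv (deriv φ) t) x := by
  set w := fun t => σ t * deriv (deriv φ) t
  have hφ' : ContDiff ℝ 3 (deriv φ) := hφ.deriv'
  have hw' : ContDiff ℝ 1 (deriv w) := (hσ.mul hφ'.deriv').deriv'
  set f : Fin 4 → ℝ → ℝ := ![φ, deriv φ, w, deriv w]
  set c : Fin 4 → ℝ → ℝ := ![1, σ⁻¹, 1, p]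
  have hf : ∀ i, ∀ t ∈ I, HasDerivAt (f i) (c i t * f (i + 1) t) t := by
    intro i t ht
    fin_cases i
    · simpa [f, c] using (hφ.differentiable (by norm_num) t).hasDerivAt
    · simpa [f, c, w, (hσpos t ht).ne'] using (hφ'.differentiable (by norm_num) t).hasDerivAt
    · simpa [f, c] using ((hσ.mul hφ'.deriv').differentiable (by norm_num) t).hasDerivAt
    · simpa [f, c, heq t ht] using (hw'.differentiable (by norm_num) t).hasDerivAt
  have hc : ∀ i, ContinuousOn (c i) I := by
    intro i
    fin_cases i
    · exact continuousOn_const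
    · exact hσ.continuous.continuousOn.inv₀ fun t ht => (hσpos t ht).ne'
    · exact continuousOn_const
    · exact hp
  have hc₀ : ∀ i, ∀ t ∈ I, 0 < c i t := by
    intro i t ht
    fin_cases i
    · exact one_pos
    · exact inv_pos.2 (hσpos t ht)
    · exact one_pos
    · exact hppos t ht
  have hwa : 0 ≤ w a := mul_nonneg (hσpos a ha).le h₂
  have hfa : ∀ i, 0 ≤ f i a := by
    intro i
    fin_cases i
    exacts [h₀, h₁, hwa, h₃]
  obtain ⟨k, hk⟩ : ∃ k, 0 < f k a := by
    by_contra! hf0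
    refine hne ⟨(hf0 0).antisymm h₀, (hf0 1).antisymm h₁, ?_, (hf0 3).antisymm h₃⟩
    exact (mul_eq_zero.1 ((hf0 2).antisymm hwa)).resolve_left (hσpos a ha).ne'
  have hpos := pos_of_hasDerivAt_cyclic hI hf hc hc₀ ha hfa hk hx hax
  exact ⟨hpos 0, hpos 1, pos_of_mul_pos_right (hpos 2) (hσpos x hx).le, hpos 3⟩

theorem leighton_nehari_left {I : Set ℝ} (hI : I.OrdConnected) {σ p φ : ℝ → ℝ}
    (hσ : ContDiff ℝ 2 σ) (hσpos : ∀ x ∈ I, 0 < σ x)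
    (hp : ContinuousOn p I) (hppos : ∀ x ∈ I, 0 < p x) (hφ : ContDiff ℝ 4 φ)
    (heq : ∀ x ∈ I, deriv (deriv fun t => σ t * deriv (deriv φ) t) x = p x * φ x)
    {a : ℝ} (ha : a ∈ I) (h₀ : 0 ≤ φ a) (h₁ : 0 ≤ -deriv φ a) (h₂ : 0 ≤ deriv (deriv φ) a)
    (h₃ : 0 ≤ -deriv (fun t => σ t * deriv (deriv φ) t) a)
    (hne : ¬(φ a = 0 ∧ deriv φ a = 0 ∧ deriv (deriv φ) a = 0 ∧
      deriv (fun t => σ t * deriv (deriv φ) t) a = 0))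
    {x : ℝ} (hx : x ∈ I) (hxa : x < a) :
    0 < φ x ∧ 0 < -deriv φ x ∧ 0 < deriv (deriv φ) x ∧
      0 < -deriv (fun t => σ t * deriv (deriv φ) t) x := by
  set w := fun t => σ t * deriv (deriv φ) t
  set ψ := fun t => φ (-t)
  have hψ : ∀ t, ψ (-t) = φ t := fun t => congrArg φ (neg_neg t)
  have hψ' : deriv ψ = fun t => -deriv φ (-t) := deriv_comp_neg_eq φ
  have hψ'' : deriv (deriv ψ) = fun t => deriv (deriv φ) (-t) := deriv_deriv_comp_neg φ
  have hwψ' : deriv (fun t => σ (-t) * deriv (deriv ψ) t) = fun t => -deriv w (-t) := by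
    rw [hψ'']; exact deriv_comp_neg_eq w
  have hwψ'' : deriv (deriv fun t => σ (-t) * deriv (deriv ψ) t) =
      fun t => deriv (deriv w) (-t) := by
    rw [hψ'']; exact deriv_deriv_comp_neg w
  have key := leighton_nehari_right (I := Neg.neg ⁻¹' I) (σ := fun t => σ (-t))
    (p := fun t => p (-t)) (φ := ψ) (a := -a) (x := -x)
    (hI.preimage_anti fun _ _ h => neg_le_neg h) (hσ.comp contDiff_neg) (fun t ht => hσpos _ ht)
    (hp.comp continuous_neg.continuousOn (mapsTo_preimage _ _)) (fun t ht => hppos _ ht)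
    (hφ.comp contDiff_neg) (fun t ht => by rw [hwψ'']; exact heq _ ht) (by simpa using ha)
    (by rwa [hψ]) (by simpa [hψ'] using h₁) (by simpa [hψ''] using h₂) (by simpa [hwψ'] using h₃)
    (by rw [hwψ', hψ'', hψ']; simpa only [hψ, neg_neg, neg_eq_zero] using hne)
    (by simpa using hx) (neg_lt_neg hxa)
  rw [hwψ', hψ'', hψ'] at key
  simpa only [hψ, neg_neg] using key

theorem leighton_nehari_positivity_general
    (I : Set ℝ) (hI : I.OrdConnected)
    (σ p φ : ℝ → ℝ)
    (hσ : ContDiff ℝ 2 σ) (hσpos : ∀ x ∈ I, 0 < σ x)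
    (hp : Continuous p) (hppos : ∀ x ∈ I, 0 < p x)
    (hφ : ContDiff ℝ 4 φ)
    (heq : ∀ x ∈ I,
      deriv (deriv (fun t => σ t * deriv (deriv φ) t)) x - p x * φ x = 0)
    (a : ℝ) (ha : a ∈ I) :
    ((0 ≤ φ a ∧ 0 ≤ deriv φ a ∧ 0 ≤ deriv (deriv φ) a ∧
        0 ≤ deriv (fun t => σ t * deriv (deriv φ) t) a ∧
        ¬(φ a = 0 ∧ deriv φ a = 0 ∧ deriv (deriv φ) a = 0 ∧
            deriv (fun t => σ t * deriv (deriv φ) t) a = 0)) →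
      ∀ x ∈ I, a < x →
        0 < φ x ∧ 0 < deriv φ x ∧ 0 < deriv (deriv φ) x ∧
          0 < deriv (fun t => σ t * deriv (deriv φ) t) x)
    ∧
    ((0 ≤ φ a ∧ 0 ≤ -deriv φ a ∧ 0 ≤ deriv (deriv φ) a ∧
        0 ≤ -deriv (fun t => σ t * deriv (deriv φ) t) a ∧
        ¬(φ a = 0 ∧ deriv φ a = 0 ∧ deriv (deriv φ) a = 0 ∧
            deriv (fun t => σ t * deriv (deriv φ) t) a = 0)) →
      ∀ x ∈ I, x < a →
        0 < φ x ∧ 0 < -deriv φ x ∧ 0 < deriv (deriv φ) x ∧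
          0 < -deriv (fun t => σ t * deriv (deriv φ) t) x) := by
  have heq' : ∀ x ∈ I, deriv (deriv fun t => σ t * deriv (deriv φ) t) x = p x * φ x :=
    fun x hx => sub_eq_zero.1 (heq x hx)
  exact ⟨fun ⟨h₀, h₁, h₂, h₃, hne⟩ x hx hax =>
      leighton_nehari_right hI hσ hσpos hp.continuousOn hppos hφ heq' ha h₀ h₁ h₂ h₃ hne hx hax,
    fun ⟨h₀, h₁, h₂, h₃, hne⟩ x hx hxa =>
      leighton_nehari_left hI hσ hσpos hp.continuousOn hppos hφ heq' ha h₀ h₁ h₂ h₃ hne hx hxa⟩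

/-- **Leighton–Nehari positivity propagation.** Let `φ` be a nontrivial `C⁴` solution of
`(σ φ'')'' − p φ = 0` on a nondegenerate interval `I`, with `σ > 0` of class `C²` and
`p > 0` continuous on `I`, and let `a ∈ I`.
(i) If `φ, φ', φ'', (σφ'')'` are nonnegative at `a` but not all zero, they are positive
for all `x ∈ I` with `x > a`.
(ii) If `φ, −φ', φ'', −(σφ'')'` are nonnegative at `a` but not all zero, then
`φ, −φ', φ'', −(σφ'')'` are positive for all `x ∈ I` with `x < a`. -/
theorem leighton_nehari_positivity
    (I : Set ℝ) (hI : I.OrdConnected) (hInd : ∃ x ∈ I, ∃ y ∈ I, x < y)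
    (σ p φ : ℝ → ℝ)
    (hσ : ContDiff ℝ 2 σ) (hσpos : ∀ x ∈ I, 0 < σ x)
    (hp : Continuous p) (hppos : ∀ x ∈ I, 0 < p x)
    (hφ : ContDiff ℝ 4 φ)
    (hφnt : ∃ x ∈ I, φ x ≠ 0)
    (heq : ∀ x ∈ I,
      deriv (deriv (fun t => σ t * deriv (deriv φ) t)) x - p x * φ x = 0)
    (a : ℝ) (ha : a ∈ I) :
    ((0 ≤ φ a ∧ 0 ≤ deriv φ a ∧ 0 ≤ deriv (deriv φ) a ∧
        0 ≤ deriv (fun t => σ t * deriv (deriv φ) t) a ∧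
        ¬(φ a = 0 ∧ deriv φ a = 0 ∧ deriv (deriv φ) a = 0 ∧
            deriv (fun t => σ t * deriv (deriv φ) t) a = 0)) →
      ∀ x ∈ I, a < x →
        0 < φ x ∧ 0 < deriv φ x ∧ 0 < deriv (deriv φ) x ∧
          0 < deriv (fun t => σ t * deriv (deriv φ) t) x)
    ∧
    ((0 ≤ φ a ∧ 0 ≤ -deriv φ a ∧ 0 ≤ deriv (deriv φ) a ∧
        0 ≤ -deriv (fun t => σ t * deriv (deriv φ) t) a ∧
        ¬(φ a = 0 ∧ deriv φ a = 0 ∧ deriv (deriv φ) a = 0 ∧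
            deriv (fun t => σ t * deriv (deriv φ) t) a = 0)) →
      ∀ x ∈ I, x < a →
        0 < φ x ∧ 0 < -deriv φ x ∧ 0 < deriv (deriv φ) x ∧
          0 < -deriv (fun t => σ t * deriv (deriv φ) t) x) :=
  leighton_nehari_positivity_general I hI σ p φ hσ hσpos hp hppos hφ heq a ha
end

section
/- (One-dimensionality of the half-boundary-value solution space.) Fix λ > 0. The set E_λ of functions φ ∈ C⁴([0,l]) satisfying (σ(x)φ'')'' − (q(x)φ')' = λ ρ(x) φ on [0,l] together with the three boundary conditions φ(0) = 0, φ''(0) = 0 and φ''(l) = 0 is a real vector space of dimension at most one; in particular, any two solutions in E_λ are linearly dependent. -/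
open Set

noncomputable section

/-- The fourth-order Boussinesq differential operator `φ ↦ (σ φ'')'' − (q φ')'`. -/
def boussinesqOp (σ q : ℝ → ℝ) (φ : ℝ → ℝ) : ℝ → ℝ :=
  fun x => deriv (deriv (fun t => σ t * deriv (deriv φ) t)) x
    - deriv (fun t => q t * deriv φ t) x

/-- Membership in the solution space `E_λ`: a `C⁴` function satisfying
`(σ φ'')'' − (q φ')' = λ ρ φ` on `[0,l]` together with the three boundary conditions
`φ(0) = 0`, `φ''(0) = 0` and `φ''(l) = 0`. -/
def MemHalfBVP (σ q ρ : ℝ → ℝ) (l lam : ℝ) (φ : ℝ → ℝ) : Prop :=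
  ContDiff ℝ 4 φ ∧
    (∀ x ∈ Icc (0:ℝ) l, boussinesqOp σ q φ x = lam * ρ x * φ x) ∧
    φ 0 = 0 ∧ deriv (deriv φ) 0 = 0 ∧ deriv (deriv φ) l = 0


/-!
Both the equation and the boundary conditions are linear, so for `φ, ψ ∈ E_λ` the combination
`u = ψ'(0) φ - φ'(0) ψ` lies in `E_λ` and has `u'(0) = 0`; it suffices to show that such a `u`
vanishes. Suppose `u'''(0) > 0` and let `z ∈ (0, l]` be the first zero of `u''`. On `(0, z)` the
functions `u''`, `u'`, `u` are positive, so `v = (σ u'')' - q u'` increases (as `v' = λ ρ u`) from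
`v(0) = σ(0) u'''(0) > 0`; then `(σ u'')' = v + q u' > 0`, so `σ u''` increases from `0` and is
positive at `z`, which is absurd. Applied to `-u` this gives `u'''(0) = 0`, so `u` has zero Cauchy
data at `0`, and Grönwall's inequality for the first-order system in `(u, u', σ u'', (σ u'')')`
forces `u = 0`.
-/

open Filter Topology

lemma deriv_linearComb {f g : ℝ → ℝ} (hf : Differentiable ℝ f) (hg : Differentiable ℝ g)
    (a b : ℝ) : deriv (fun x => a * f x + b * g x) = fun x => a * deriv f x + b * deriv g x := by
  funext x
  simp [hf x, hg x]

lemma deriv_deriv_linearComb {f g : ℝ → ℝ} (hf : ContDiff ℝ 2 f) (hg : ContDiff ℝ 2 g)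
    (a b : ℝ) : deriv (deriv fun x => a * f x + b * g x)
      = fun x => a * deriv (deriv f) x + b * deriv (deriv g) x := by
  rw [deriv_linearComb (hf.differentiable (by norm_num)) (hg.differentiable (by norm_num)),
    deriv_linearComb hf.differentiable_deriv_two hg.differentiable_deriv_two]

lemma lt_of_deriv_pos_on_Ioo {f : ℝ → ℝ} {a b x : ℝ} (hf : ContinuousOn f (Icc a b))
    (hf' : ∀ y ∈ Ioo a b, 0 < deriv f y) (hx : x ∈ Ioc a b) : f a < f x :=
  strictMonoOn_of_deriv_pos (convex_Icc a b) hf (by rwa [interior_Icc])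
    (left_mem_Icc.2 (hx.1.le.trans hx.2)) (Ioc_subset_Icc_self hx) hx.1

lemma exists_first_nonpos_s5 {g : ℝ → ℝ} {a b : ℝ} (hab : a < b) (hg : ContinuousOn g (Icc a b))
    (hpos : ∀ᶠ x in 𝓝[>] a, 0 < g x) (hb : g b ≤ 0) :
    ∃ z ∈ Ioc a b, g z ≤ 0 ∧ ∀ x ∈ Ioo a z, 0 < g x := by
  obtain ⟨c, hac, hc⟩ := (nhdsGT_basis a).eventually_iff.1 hpos
  have had : a < min c b := lt_min hac hab
  set T := Icc (min c b) b ∩ g ⁻¹' Iic 0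
  have hT : IsClosed T := (hg.mono (Icc_subset_Icc_left had.le)).preimage_isClosed_of_isClosed
    isClosed_Icc isClosed_Iic
  have hTbdd : BddBelow T := ⟨min c b, fun x hx => hx.1.1⟩
  have hzT : sInf T ∈ T := hT.csInf_mem ⟨b, right_mem_Icc.2 (min_le_right c b), hb⟩ hTbdd
  refine ⟨sInf T, ⟨had.trans_le hzT.1.1, hzT.1.2⟩, hzT.2, fun x hx => ?_⟩
  rcases lt_or_ge x (min c b) with hxd | hdx
  · exact hc ⟨hx.1, hxd.trans_le (min_le_left c b)⟩
  · by_contra! hgx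
    exact (csInf_le hTbdd ⟨⟨hdx, hx.2.le.trans hzT.1.2⟩, hgx⟩).not_gt hx.2

lemma eqOn_zero_of_norm_deriv_le_mul {E : Type*} [NormedAddCommGroup E] [NormedSpace ℝ E]
    {f f' : ℝ → E} {c : ℝ → ℝ} {a b : ℝ} (hf : ContinuousOn f (Icc a b))
    (hf' : ∀ x ∈ Ico a b, HasDerivWithinAt f (f' x) (Ici x) x) (ha : f a = 0)
    (hc : ContinuousOn c (Icc a b)) (bound : ∀ x ∈ Ico a b, ‖f' x‖ ≤ c x * ‖f x‖) :
    EqOn f 0 (Icc a b) := by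
  obtain ⟨K, hK⟩ := isCompact_Icc.exists_bound_of_continuousOn hc
  refine eq_zero_of_abs_deriv_le_mul_abs_self_of_eq_zero_right (K := K) hf hf' ha fun x hx => ?_
  exact (bound x hx).trans <| mul_le_mul_of_nonneg_right
    ((le_abs_self _).trans (hK x (Ico_subset_Icc_self hx))) (norm_nonneg _)

def boussinesqState (σ u : ℝ → ℝ) (x : ℝ) : ℝ × ℝ × ℝ × ℝ :=
  (u x, deriv u x, σ x * deriv (deriv u) x, deriv (fun t => σ t * deriv (deriv u) t) x)

-- From `u'' = (σ u'') / σ` and `(σ u'')'' = λ ρ u + q' u' + q u''`.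
def boussinesqField (σ q ρ : ℝ → ℝ) (lam x : ℝ) (Y : ℝ × ℝ × ℝ × ℝ) : ℝ × ℝ × ℝ × ℝ :=
  (Y.2.1, Y.2.2.1 / σ x, Y.2.2.2, lam * ρ x * Y.1 + deriv q x * Y.2.1 + q x / σ x * Y.2.2.1)

lemma norm_boussinesqField_le {σ q ρ : ℝ → ℝ} {lam x : ℝ} (hσ : 0 < σ x) (Y : ℝ × ℝ × ℝ × ℝ) :
    ‖boussinesqField σ q ρ lam x Y‖
      ≤ (1 + 1 / σ x + |lam * ρ x| + |deriv q x| + |q x| / σ x) * ‖Y‖ := by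
  obtain ⟨y₀, y₁, y₂, y₃⟩ := Y
  set N := ‖(y₀, y₁, y₂, y₃)‖
  obtain ⟨h₀, h₁, h₂, h₃⟩ : |y₀| ≤ N ∧ |y₁| ≤ N ∧ |y₂| ≤ N ∧ |y₃| ≤ N := by
    simp [N, Prod.norm_def]
  have hy₂ : |y₂| / σ x ≤ N / σ x := by gcongr
  have hy₃ : |lam * ρ x * y₀ + deriv q x * y₁ + q x / σ x * y₂|
      ≤ |lam * ρ x| * N + |deriv q x| * N + |q x| / σ x * N :=
    calc _ ≤ |lam * ρ x| * |y₀| + |deriv q x| * |y₁| + |q x| / σ x * |y₂| := by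
          simpa only [abs_mul (lam * ρ x), abs_mul (deriv q x), abs_mul (q x / σ x), abs_div,
            abs_of_pos hσ] using abs_add_three (lam * ρ x * y₀) (deriv q x * y₁) (q x / σ x * y₂)
      _ ≤ _ := by gcongr
  have hc : (1 + 1 / σ x + |lam * ρ x| + |deriv q x| + |q x| / σ x) * N
      = N + N / σ x + (|lam * ρ x| * N + |deriv q x| * N + |q x| / σ x * N) := by ring
  have : 0 ≤ N := norm_nonneg _
  have : 0 ≤ N / σ x := by positivity
  have : 0 ≤ |lam * ρ x| * N + |deriv q x| * N + |q x| / σ x * N := by positivity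
  simp only [boussinesqField, Prod.norm_def, Real.norm_eq_abs, max_le_iff, abs_div,
    abs_of_pos hσ, hc]
  exact ⟨by linarith, by linarith, by linarith, by linarith⟩

section Boussinesq

variable {σ q ρ : ℝ → ℝ} {l lam : ℝ}

lemma boussinesqOp_linearComb (hσ : ContDiff ℝ 2 σ) (hq : Differentiable ℝ q) {φ ψ : ℝ → ℝ}
    (hφ : ContDiff ℝ 4 φ) (hψ : ContDiff ℝ 4 ψ) (a b : ℝ) :
    boussinesqOp σ q (fun t => a * φ t + b * ψ t)
      = fun x => a * boussinesqOp σ q φ x + b * boussinesqOp σ q ψ x := by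
  have hσφ : (fun t => σ t * deriv (deriv fun s => a * φ s + b * ψ s) t)
      = fun t => a * (σ t * deriv (deriv φ) t) + b * (σ t * deriv (deriv ψ) t) := by
    rw [deriv_deriv_linearComb (hφ.of_le (by norm_num)) (hψ.of_le (by norm_num))]
    funext t; ring
  have hqφ : (fun t => q t * deriv (fun s => a * φ s + b * ψ s) t)
      = fun t => a * (q t * deriv φ t) + b * (q t * deriv ψ t) := by
    rw [deriv_linearComb (hφ.differentiable (by norm_num)) (hψ.differentiable (by norm_num))]
    funext t; ring
  funext x
  simp only [boussinesqOp, hσφ, hqφ]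
  rw [deriv_deriv_linearComb ?_ ?_, deriv_linearComb ?_ ?_]
  · ring
  all_goals fun_prop (disch := norm_num)

lemma MemHalfBVP.linearComb (hσ : ContDiff ℝ 2 σ) (hq : Differentiable ℝ q) {φ ψ : ℝ → ℝ}
    (hφ : MemHalfBVP σ q ρ l lam φ) (hψ : MemHalfBVP σ q ρ l lam ψ) (a b : ℝ) :
    MemHalfBVP σ q ρ l lam (fun t => a * φ t + b * ψ t) := by
  obtain ⟨hφ4, hφeq, hφ0, hφ2, hφ2l⟩ := hφ
  obtain ⟨hψ4, hψeq, hψ0, hψ2, hψ2l⟩ := hψ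
  have h2 := deriv_deriv_linearComb (hφ4.of_le (by norm_num)) (hψ4.of_le (by norm_num)) a b
  refine ⟨by fun_prop, fun x hx => ?_, by simp [hφ0, hψ0], by simp [h2, hφ2, hψ2],
    by simp [h2, hφ2l, hψ2l]⟩
  simp only [boussinesqOp_linearComb hσ hq hφ4 hψ4, hφeq x hx, hψeq x hx]
  ring

lemma MemHalfBVP.neg {u : ℝ → ℝ} (hu : MemHalfBVP σ q ρ l lam u) :
    MemHalfBVP σ q ρ l lam (-u) := by
  obtain ⟨hu4, hueq, hu0, hu2, hu2l⟩ := hu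
  refine ⟨hu4.neg, fun x hx => ?_, by simp [hu0], by simp [hu2], by simp [hu2l]⟩
  have := hueq x hx
  simp only [boussinesqOp, Pi.neg_apply, mul_neg, deriv.fun_neg', deriv.neg'] at this ⊢
  linarith

lemma hasDerivAt_boussinesqState (hσ : ContDiff ℝ 2 σ) (hq : Differentiable ℝ q) {u : ℝ → ℝ}
    (hu : ContDiff ℝ 4 u) {x : ℝ} (hσx : σ x ≠ 0) (hx : boussinesqOp σ q u x = lam * ρ x * u x) :
    HasDerivAt (boussinesqState σ u) (boussinesqField σ q ρ lam x (boussinesqState σ u x)) x := by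
  have hu3 : ContDiff ℝ 3 (deriv u) := hu.deriv'
  have hu2 : ContDiff ℝ 2 (deriv (deriv u)) := hu3.deriv'
  have hW : ContDiff ℝ 2 fun t => σ t * deriv (deriv u) t := hσ.mul hu2
  have hqu : deriv (fun t => q t * deriv u t) x
      = deriv q x * deriv u x + q x * deriv (deriv u) x :=
    deriv_fun_mul (hq x) (hu3.differentiable (by norm_num) x)
  have hfield : boussinesqField σ q ρ lam x (boussinesqState σ u x)
      = (deriv u x, deriv (deriv u) x, deriv (fun t => σ t * deriv (deriv u) t) x,
          deriv (deriv fun t => σ t * deriv (deriv u) t) x) := by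
    rw [boussinesqOp, hqu] at hx
    simp only [boussinesqField, boussinesqState, Prod.mk.injEq, mul_div_cancel_left₀ _ hσx,
      true_and]
    field_simp
    linarith
  rw [hfield]
  exact (hu.differentiable (by norm_num) x).hasDerivAt.prodMk
    ((hu3.differentiable (by norm_num) x).hasDerivAt.prodMk
      ((hW.differentiable (by norm_num) x).hasDerivAt.prodMk
        (hW.differentiable_deriv_two x).hasDerivAt))

lemma eqOn_zero_of_boussinesqOp_eq {a b : ℝ} (hσ : ContDiff ℝ 2 σ) (hq : ContDiff ℝ 1 q)
    (hρ : ContinuousOn ρ (Icc a b)) (hσpos : ∀ x ∈ Icc a b, 0 < σ x) {u : ℝ → ℝ}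
    (hu : ContDiff ℝ 4 u) (hueq : ∀ x ∈ Icc a b, boussinesqOp σ q u x = lam * ρ x * u x)
    (h0 : u a = 0) (h1 : deriv u a = 0) (h2 : deriv (deriv u) a = 0)
    (h3 : deriv (deriv (deriv u)) a = 0) :
    EqOn u 0 (Icc a b) := by
  have hstate : ∀ x ∈ Icc a b, HasDerivAt (boussinesqState σ u)
      (boussinesqField σ q ρ lam x (boussinesqState σ u x)) x := fun x hx =>
    hasDerivAt_boussinesqState hσ (hq.differentiable one_ne_zero) hu (hσpos x hx).ne' (hueq x hx)
  have hstate_a : boussinesqState σ u a = 0 := by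
    have hu2 : ContDiff ℝ 2 (deriv (deriv u)) := hu.deriv'.deriv'
    simp [boussinesqState, deriv_fun_mul (hσ.differentiable (by norm_num) a)
      (hu2.differentiable (by norm_num) a), h0, h1, h2, h3]
  have hσne : ∀ x ∈ Icc a b, σ x ≠ 0 := fun x hx => (hσpos x hx).ne'
  have hq' : Continuous (deriv q) := hq.continuous_deriv le_rfl
  have hc : ContinuousOn (fun x => 1 + 1 / σ x + |lam * ρ x| + |deriv q x| + |q x| / σ x)
      (Icc a b) := by
    have := hσ.continuous; have := hq.continuous
    fun_prop (disch := assumption)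
  have hzero := eqOn_zero_of_norm_deriv_le_mul
    (fun x hx => (hstate x hx).continuousAt.continuousWithinAt)
    (fun x hx => (hstate x (Ico_subset_Icc_self hx)).hasDerivWithinAt) hstate_a hc
    (fun x hx => norm_boussinesqField_le (hσpos x (Ico_subset_Icc_self hx)) _)
  exact fun x hx => congrArg Prod.fst (hzero hx)

lemma MemHalfBVP.deriv_deriv_deriv_nonpos (hl : 0 < l) (hσ : ContDiff ℝ 2 σ)
    (hq : Differentiable ℝ q) (hρ : ∀ x ∈ Icc 0 l, 0 < ρ x) (hσpos : ∀ x ∈ Icc 0 l, 0 < σ x)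
    (hqnn : ∀ x ∈ Icc 0 l, 0 ≤ q x) (hlam : 0 < lam) {u : ℝ → ℝ}
    (hu : MemHalfBVP σ q ρ l lam u) (h1 : deriv u 0 = 0) :
    deriv (deriv (deriv u)) 0 ≤ 0 := by
  obtain ⟨hu4, hueq, h0, h2, h2l⟩ := hu
  have hu3 : ContDiff ℝ 3 (deriv u) := hu4.deriv'
  have hu2 : ContDiff ℝ 2 (deriv (deriv u)) := hu3.deriv'
  by_contra! h3
  obtain ⟨z, ⟨hz0, hzl⟩, hu2z, hu2pos⟩ := exists_first_nonpos_s5 hl hu2.continuous.continuousOn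
    (deriv_pos_right_of_sign_deriv
      ((eventually_nhdsWithin_sign_eq_of_deriv_pos h3 h2).filter_mono nhdsWithin_le_nhds)) h2l.le
  have hzl' : ∀ y ∈ Ioo 0 z, y ∈ Icc 0 l := fun y hy => ⟨hy.1.le, hy.2.le.trans hzl⟩
  have hu1pos : ∀ x ∈ Ioc 0 z, 0 < deriv u x := fun x hx => h1 ▸ lt_of_deriv_pos_on_Ioo
    hu3.continuous.continuousOn hu2pos hx
  have hupos : ∀ x ∈ Ioc 0 z, 0 < u x := fun x hx => h0 ▸ lt_of_deriv_pos_on_Ioo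
    hu4.continuous.continuousOn (fun y hy => hu1pos y (Ioo_subset_Ioc_self hy)) hx
  set W := fun t => σ t * deriv (deriv u) t
  have hW : ContDiff ℝ 2 W := hσ.mul hu2
  have hqu : Differentiable ℝ fun t => q t * deriv u t :=
    hq.mul (hu3.differentiable (by norm_num))
  set v := fun t => deriv W t - q t * deriv u t
  have hv0 : 0 < v 0 := by
    have : v 0 = σ 0 * deriv (deriv (deriv u)) 0 := by
      simp only [v, W, deriv_fun_mul (hσ.differentiable (by norm_num) 0)
        (hu2.differentiable (by norm_num) 0), h1, h2]
      ring
    exact this ▸ mul_pos (hσpos 0 ⟨le_rfl, hl.le⟩) h3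
  have hvpos : ∀ x ∈ Ioc 0 z, 0 < v x := by
    refine fun x hx => hv0.trans (lt_of_deriv_pos_on_Ioo ?_ (fun y hy => ?_) hx)
    · exact ((hW.continuous_deriv (by norm_num)).sub hqu.continuous).continuousOn
    have hv' : deriv v y = boussinesqOp σ q u y :=
      deriv_fun_sub (hW.differentiable_deriv_two y) (hqu y)
    rw [hv', hueq y (hzl' y hy)]
    exact mul_pos (mul_pos hlam (hρ y (hzl' y hy)))
      (hupos y (Ioo_subset_Ioc_self hy))
  have hWz : W 0 < W z := by
    refine lt_of_deriv_pos_on_Ioo hW.continuous.continuousOn (fun y hy => ?_) ⟨hz0, le_rfl⟩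
    have := mul_nonneg (hqnn y (hzl' y hy))
      (hu1pos y (Ioo_subset_Ioc_self hy)).le
    linarith [hvpos y (Ioo_subset_Ioc_self hy)]
  have : W z ≤ 0 := mul_nonpos_of_nonneg_of_nonpos (hσpos z ⟨hz0.le, hzl⟩).le hu2z
  simp only [W, h2, mul_zero] at hWz
  linarith

lemma MemHalfBVP.deriv_deriv_deriv_eq_zero (hl : 0 < l) (hσ : ContDiff ℝ 2 σ)
    (hq : Differentiable ℝ q) (hρ : ∀ x ∈ Icc 0 l, 0 < ρ x) (hσpos : ∀ x ∈ Icc 0 l, 0 < σ x)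
    (hqnn : ∀ x ∈ Icc 0 l, 0 ≤ q x) (hlam : 0 < lam) {u : ℝ → ℝ}
    (hu : MemHalfBVP σ q ρ l lam u) (h1 : deriv u 0 = 0) :
    deriv (deriv (deriv u)) 0 = 0 := by
  refine le_antisymm (hu.deriv_deriv_deriv_nonpos hl hσ hq hρ hσpos hqnn hlam h1) ?_
  simpa using hu.neg.deriv_deriv_deriv_nonpos hl hσ hq hρ hσpos hqnn hlam (by simp [h1])

lemma MemHalfBVP.eqOn_zero (hl : 0 < l) (hσ : ContDiff ℝ 2 σ) (hq : ContDiff ℝ 1 q)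
    (hρc : ContinuousOn ρ (Icc 0 l)) (hρ : ∀ x ∈ Icc 0 l, 0 < ρ x) (hσpos : ∀ x ∈ Icc 0 l, 0 < σ x)
    (hqnn : ∀ x ∈ Icc 0 l, 0 ≤ q x) (hlam : 0 < lam) {u : ℝ → ℝ}
    (hu : MemHalfBVP σ q ρ l lam u) (h1 : deriv u 0 = 0) :
    EqOn u 0 (Icc 0 l) :=
  eqOn_zero_of_boussinesqOp_eq hσ hq hρc hσpos hu.1 hu.2.1 hu.2.2.1 h1 hu.2.2.2.1
    (hu.deriv_deriv_deriv_eq_zero hl hσ (hq.differentiable one_ne_zero) hρ hσpos hqnn hlam h1)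

end Boussinesq

/-- **One-dimensionality of the half-boundary-value solution space.** Any two elements
of `E_λ` are linearly dependent on `[0,l]`. -/
theorem halfBVP_solution_space_dim_le_one
    (l : ℝ) (hl : 0 < l)
    (ρ σ q : ℝ → ℝ)
    (hρs : ContDiff ℝ 3 ρ) (hσs : ContDiff ℝ 3 σ) (hqs : ContDiff ℝ 1 q)
    (ρ0 σ0 : ℝ) (hρ0 : 0 < ρ0) (hσ0 : 0 < σ0)
    (hρb : ∀ x ∈ Icc (0:ℝ) l, ρ0 ≤ ρ x)
    (hσb : ∀ x ∈ Icc (0:ℝ) l, σ0 ≤ σ x)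
    (hqb : ∀ x ∈ Icc (0:ℝ) l, 0 ≤ q x)
    (lam : ℝ) (hlam : 0 < lam)
    (φ ψ : ℝ → ℝ)
    (hφ : MemHalfBVP σ q ρ l lam φ) (hψ : MemHalfBVP σ q ρ l lam ψ) :
    ∃ a b : ℝ, ¬(a = 0 ∧ b = 0) ∧ ∀ x ∈ Icc (0:ℝ) l, a * φ x + b * ψ x = 0 := by
  have hσ : ContDiff ℝ 2 σ := hσs.of_le (by norm_num)
  have hq : Differentiable ℝ q := hqs.differentiable one_ne_zero
  have hvanish : ∀ u, MemHalfBVP σ q ρ l lam u → deriv u 0 = 0 → EqOn u 0 (Icc 0 l) :=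
    fun u hu h1 => hu.eqOn_zero hl hσ hqs hρs.continuous.continuousOn (fun x hx => hρ0.trans_le (hρb x hx))
      (fun x hx => hσ0.trans_le (hσb x hx)) hqb hlam h1
  by_cases hφ1 : deriv φ 0 = 0
  · exact ⟨1, 0, by simp, fun x hx => by simpa using hvanish φ hφ hφ1 hx⟩
  refine ⟨deriv ψ 0, -deriv φ 0, fun h => hφ1 (neg_eq_zero.1 h.2), fun x hx => ?_⟩
  refine hvanish _ (hφ.linearComb hσ hq hψ _ _) ?_ hx
  rw [deriv_linearComb (hφ.1.differentiable (by norm_num)) (hψ.1.differentiable (by norm_num))]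
  ring
end
end
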